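/- For every d ≥ 1 and every d-regular graph E, the graph G_E of the construction is not Hamiltonian. -/

import Mathlib

open SimpleGraph

variable {V : Type*}

/-- The closed neighbourhood `N_G(S) = S ∪ {v : v adjacent to some w ∈ S}`. -/
def closedNbhd (G : SimpleGraph V) (S : Set V) : Set V :=
  S ∪ {v | ∃ w ∈ S, G.Adj v w}

/-- `G` has maximum degree at most `d`. -/
def MaxDegLE (G : SimpleGraph V) (d : ℕ) : Prop :=
  ∀ v, (G.neighborSet v).ncard ≤ d

/-- `G` is `ε`-far from being Hamiltonian (w.r.t. the degree bound `d`):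
modifying at most `ε·d·|V|` edges cannot make `G` Hamiltonian. -/
def FarFromHamiltonian [Fintype V] [DecidableEq V] (G : SimpleGraph V) (d : ℕ) (ε : ℝ) : Prop :=
  ∀ F : Finset (Sym2 V), (∀ e ∈ F, ¬ e.IsDiag) →
    (F.card : ℝ) ≤ ε * d * (Fintype.card V) →
    ¬ (SimpleGraph.fromEdgeSet (symmDiff G.edgeSet (↑F : Set (Sym2 V)))).IsHamiltonian

/-- `G` is `δ`-locally Hamiltonian on the class `C`: for every `S` with `|S| ≤ δ·|V|`
there is a Hamiltonian `H ∈ C` (on the same vertex set, hence of the same order),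
a set `T`, and an isomorphism `G[N_G(S)] ≅ H[N_H(T)]` mapping `S` onto `T`. -/
def LocallyHamiltonian [Fintype V] [DecidableEq V] (C : SimpleGraph V → Prop) (δ : ℝ)
    (G : SimpleGraph V) : Prop :=
  ∀ S : Set V, (S.ncard : ℝ) ≤ δ * (Fintype.card V) →
    ∃ H : SimpleGraph V, C H ∧ H.IsHamiltonian ∧ ∃ T : Set V,
      ∃ φ : (SimpleGraph.induce (closedNbhd G S) G) ≃g (SimpleGraph.induce (closedNbhd H T) H),
        ∀ x : closedNbhd G S, (x : V) ∈ S ↔ ((φ x : V) ∈ T)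

/-- `S` witnesses non-Hamiltonicity of `G` among graphs of maximum degree at most `d`:
no Hamiltonian graph `H` of the same order with degree bound `d` admits a set `T` and an
isomorphism `G[N_G(S)] ≅ H[N_H(T)]` mapping `S` onto `T`. -/
def WitnessesNonHamiltonicity [Fintype V] [DecidableEq V] (G : SimpleGraph V) (d : ℕ)
    (S : Set V) : Prop :=
  ∀ H : SimpleGraph V, H.IsHamiltonian → MaxDegLE H d → ∀ T : Set V,
    ¬ ∃ φ : (SimpleGraph.induce (closedNbhd G S) G) ≃g (SimpleGraph.induce (closedNbhd H T) H),
        ∀ x : closedNbhd G S, (x : V) ∈ S ↔ ((φ x : V) ∈ T)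

/-- `E` is `d`-regular. -/
def IsRegularDeg (E : SimpleGraph V) (d : ℕ) : Prop :=
  ∀ v, (E.neighborSet v).ncard = d

/-- The arcs of the directed graph `→E` obtained by replacing each edge by two arcs. -/
abbrev Arc (E : SimpleGraph V) : Type _ := {p : V × V // E.Adj p.1 p.2}

instance arcDecPred [Fintype V] (E : SimpleGraph V) [DecidableRel E.Adj] :
    DecidablePred (fun p : V × V => E.Adj p.1 p.2) := fun p => ‹DecidableRel E.Adj› p.1 p.2

/-- The vertex set of `G_E`: 31 `a`-vertices per arc and 6 `b`-vertices per vertex. -/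
abbrev GEVert (E : SimpleGraph V) : Type _ := (Arc E × Fin 31) ⊕ (V × Fin 6)

/-- For `1 ≤ j ≤ 31`, the vertex `a_j^e` of `G_E`. -/
def aV {E : SimpleGraph V} (e : Arc E) (j : ℕ) : GEVert E :=
  Sum.inl (e, ⟨(j - 1) % 31, by omega⟩)

/-- For `1 ≤ k ≤ 6`, the vertex `b_k^v` of `G_E`. -/
def bV (E : SimpleGraph V) (v : V) (k : ℕ) : GEVert E :=
  Sum.inr (v, ⟨(k - 1) % 6, by omega⟩)

/-- Adjacency (with 1-based indices) inside the gadget `P(v_1,…,v_31)` (unsymmetrised):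
`{v_i, v_{i+1}}` for `1 ≤ i ≤ 30`, `{v_j, v_{j+3}}` for `j ∈ {2,27}`, and
`{v_k, v_{k+5}}` for `k ∈ {6,12,15,21}`. -/
def gadgetRel (i j : ℕ) : Prop :=
  (1 ≤ i ∧ i ≤ 30 ∧ j = i + 1) ∨
  ((i = 2 ∧ j = 5) ∨ (i = 27 ∧ j = 30) ∨ (i = 6 ∧ j = 11) ∨ (i = 12 ∧ j = 17) ∨
    (i = 15 ∧ j = 20) ∨ (i = 21 ∧ j = 26))

/-- The generating relation for the edges of `G_E`: the gadget edges, the cyclic edges given by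
the linear order `f` on arcs, and the link edges (a link from the gadget of an arc `e = (u,v)`
to the gadget of an arc `e' = (v,w)` via `b_1^v,…,b_6^v`). -/
def GERel [Fintype V] (E : SimpleGraph V) [DecidableRel E.Adj]
    (f : Arc E ≃ Fin (Fintype.card (Arc E))) (x y : GEVert E) : Prop :=
  (∃ (e : Arc E) (i j : ℕ), gadgetRel i j ∧ x = aV e i ∧ y = aV e j) ∨
  (∃ e e' : Arc E, (f e').val = ((f e).val + 1) % (Fintype.card (Arc E)) ∧
      x = aV e 31 ∧ y = aV e' 1) ∨
  (∃ e e' : Arc E, e.1.2 = e'.1.1 ∧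
    ((x = aV e 23 ∧ y = aV e' 3) ∨ (x = aV e 18 ∧ y = aV e' 8) ∨
     (x = aV e 29 ∧ y = aV e' 9) ∨ (x = aV e 24 ∧ y = aV e' 14) ∨
     (x = aV e' 5 ∧ y = bV E e.1.2 1) ∨ (x = bV E e.1.2 1 ∧ y = bV E e.1.2 2) ∨
     (x = bV E e.1.2 2 ∧ y = bV E e.1.2 3) ∨ (x = bV E e.1.2 3 ∧ y = aV e 23) ∨
     (x = aV e 24 ∧ y = bV E e.1.2 4) ∨ (x = bV E e.1.2 4 ∧ y = bV E e.1.2 5) ∨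
     (x = bV E e.1.2 5 ∧ y = bV E e.1.2 6) ∨ (x = bV E e.1.2 6 ∧ y = aV e' 12)))

/-- The graph `G_E` of the construction. -/
def GE [Fintype V] (E : SimpleGraph V) [DecidableRel E.Adj]
    (f : Arc E ≃ Fin (Fintype.card (Arc E))) : SimpleGraph (GEVert E) :=
  SimpleGraph.fromRel (GERel E f)

/-- The list `L` of vertices is a subpath of the closed walk `C`, i.e. it appears (forwards or
reversed) as a sequence of consecutive vertices of `C` (cyclically). -/
def IsSubpath {W : Type*} (G : SimpleGraph W) {x : W} (C : G.Walk x x) (L : List W) : Prop :=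
  (∃ i : ℕ, ∀ (j : ℕ) (h : j < L.length), L.get ⟨j, h⟩ = C.getVert ((i + j) % C.length)) ∨
  (∃ i : ℕ, ∀ (j : ℕ) (h : j < L.reverse.length),
      L.reverse.get ⟨j, h⟩ = C.getVert ((i + j) % C.length))

/-- The expansion ratio of `E` is at least `1`: every nonempty `S` with `|S| ≤ |V|/2` has at
least `|S|` boundary edges. -/
def ExpansionGeOne [Fintype V] (E : SimpleGraph V) : Prop :=
  ∀ S : Set V, S.Nonempty → 2 * S.ncard ≤ Fintype.card V →
    S.ncard ≤ {p : Sym2 V | p ∈ E.edgeSet ∧ ∃ x ∈ S, ∃ y, y ∉ S ∧ p = s(x, y)}.ncard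

/-!
In a Hamiltonian cycle every vertex uses exactly two of its edges. Inside a gadget this forces the
edges at the vertices `a₇, a₁₀, a₁₃, a₁₉`, whose only neighbours are two gadget vertices. If the
cycle uses `a₈a₉`, it must also use `a₁₁a₁₂` (otherwise `a₆ … a₁₁` would close a 6-cycle), and then
`a₁₇a₁₈`, because `a₁₂` has only one slot besides `a₁₂a₁₃`.

Let `A`, `B`, `D` be the sets of arcs whose gadget misses `a₈a₉`, misses `a₁₇a₁₈`, and uses an edge
`b₆a₁₂`, respectively. Then `B` and `D` are disjoint subsets of `A`, and `D` is nonempty since every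
`b₆` is entered from some `a₁₂`. On the other hand, for an arc of `A` the vertex `a₈` must leave its
gadget along a link edge to the `a₁₈` of an arc in `B`, and since every `a₁₈` is also tied to its
`a₁₉`, distinct arcs of `A` reach distinct arcs of `B`. Hence `|A| ≤ |B| < |B| + |D| ≤ |A|`.
-/

namespace SimpleGraph.Walk

variable {W : Type*} {G : SimpleGraph W}

theorem mem_of_mem_support_of_edges_closed {a b : W} (w : G.Walk a b) {S : Set W}
    (hS : ∀ x ∈ S, ∀ y, s(x, y) ∈ w.edges → y ∈ S) {v : W} (hv : v ∈ w.support)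
    (hvS : v ∈ S) {u : W} (hu : u ∈ w.support) : u ∈ S := by
  induction w generalizing u v with
  | nil => simp_all
  | @cons a c b hadj w ih =>
    have hS' : ∀ x ∈ S, ∀ y, s(x, y) ∈ w.edges → y ∈ S :=
      fun x hx y hy => hS x hx y (by simp [hy])
    have hc : c ∈ S := by
      rcases List.mem_cons.mp (support_cons _ _ ▸ hv) with rfl | hv
      · exact hS _ hvS _ (by simp)
      · exact ih hS' hv hvS w.start_mem_support
    rcases List.mem_cons.mp (support_cons _ _ ▸ hu) with rfl | hu
    · exact hS _ hc _ (by simp [Sym2.eq_swap])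
    · exact ih hS' w.start_mem_support hc hu

variable [DecidableEq W] {r : W} {p : G.Walk r r}

theorem IsHamiltonianCycle.ncard_setOf_mem_edges (hp : p.IsHamiltonianCycle) (x : W) :
    {y | s(x, y) ∈ p.edges}.ncard = 2 := by
  have h := hp.isCycle.ncard_neighborSet_toSubgraph_eq_two (hp.mem_support x)
  simpa only [Subgraph.neighborSet, adj_toSubgraph_iff_mem_edges] using h

theorem IsHamiltonianCycle.eq_or_eq_of_mem_edges (hp : p.IsHamiltonianCycle) {x y₁ y₂ y : W}
    (h₁₂ : y₁ ≠ y₂) (h₁ : s(x, y₁) ∈ p.edges) (h₂ : s(x, y₂) ∈ p.edges)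
    (h : s(x, y) ∈ p.edges) : y = y₁ ∨ y = y₂ := by
  have := hp.ncard_setOf_mem_edges x
  rw [Set.ncard_eq_two] at this
  obtain ⟨a, b, -, hab⟩ := this
  simp only [Set.ext_iff, Set.mem_ofPred_eq, Set.mem_insert_iff, Set.mem_singleton_iff] at hab
  rw [hab] at h₁ h₂ h
  grind

theorem IsHamiltonianCycle.eq_of_mem_edges (hp : p.IsHamiltonianCycle) {x u y z : W}
    (hu : s(x, u) ∈ p.edges) (hy : s(x, y) ∈ p.edges) (hz : s(x, z) ∈ p.edges) (hyu : y ≠ u)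
    (hzu : z ≠ u) : y = z :=
  ((hp.eq_or_eq_of_mem_edges hyu.symm hu hy hz).resolve_left hzu).symm

theorem IsHamiltonianCycle.mem_edges_of_forall (hp : p.IsHamiltonianCycle) {x u v : W}
    (huv : u ≠ v) (h : ∀ y, s(x, y) ∈ p.edges → y = u ∨ y = v) :
    s(x, u) ∈ p.edges ∧ s(x, v) ∈ p.edges := by
  have hsub : {y | s(x, y) ∈ p.edges} ⊆ {u, v} := h
  have := Set.eq_of_subset_of_ncard_le hsub (by rw [hp.ncard_setOf_mem_edges, Set.ncard_pair huv])
  simp only [Set.ext_iff, Set.mem_ofPred_eq, Set.mem_insert_iff, Set.mem_singleton_iff] at this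
  exact ⟨(this u).2 (.inl rfl), (this v).2 (.inr rfl)⟩

theorem IsHamiltonianCycle.exists_mem_edges_of_forall (hp : p.IsHamiltonianCycle) {x u : W}
    {P : W → Prop} (h : ∀ y, s(x, y) ∈ p.edges → y = u ∨ P y) : ∃ y, P y ∧ s(x, y) ∈ p.edges := by
  obtain ⟨a, b, hab, hx⟩ := Set.ncard_eq_two.mp (hp.ncard_setOf_mem_edges x)
  have ha : s(x, a) ∈ p.edges := (Set.ext_iff.mp hx a).2 (by simp)
  have hb : s(x, b) ∈ p.edges := (Set.ext_iff.mp hx b).2 (by simp)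
  rcases h a ha with rfl | hPa
  · rcases h b hb with rfl | hPb
    · exact absurd rfl hab
    · exact ⟨b, hPb, hb⟩
  · exact ⟨a, hPa, ha⟩

theorem IsHamiltonianCycle.mem_of_edges_closed (hp : p.IsHamiltonianCycle) {S : Set W}
    (hS : ∀ x ∈ S, ∀ y, s(x, y) ∈ p.edges → y ∈ S) {v : W} (hv : v ∈ S) (u : W) : u ∈ S :=
  p.mem_of_mem_support_of_edges_closed hS (hp.mem_support v) hv (hp.mem_support u)

theorem IsHamiltonianCycle.mem_of_forall_exists_two (hp : p.IsHamiltonianCycle) {S : Set W}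
    (hS : ∀ x ∈ S, ∃ y₁ ∈ S, ∃ y₂ ∈ S, y₁ ≠ y₂ ∧ s(y₁, x) ∈ p.edges ∧ s(x, y₂) ∈ p.edges)
    {v : W} (hv : v ∈ S) (u : W) : u ∈ S := by
  refine hp.mem_of_edges_closed (fun x hx y hy => ?_) hv u
  obtain ⟨y₁, hy₁, y₂, hy₂, hne, h₁, h₂⟩ := hS x hx
  rw [Sym2.eq_swap] at h₁
  rcases hp.eq_or_eq_of_mem_edges hne h₁ h₂ hy with rfl | rfl <;> assumption

end SimpleGraph.Walk

theorem aV_eq_aV {E : SimpleGraph V} {g g' : Arc E} {i j : ℕ} :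
    aV g i = aV g' j ↔ g = g' ∧ (i - 1) % 31 = (j - 1) % 31 := by
  simp [aV]

theorem bV_eq_bV {E : SimpleGraph V} {v w : V} {k l : ℕ} :
    bV E v k = bV E w l ↔ v = w ∧ (k - 1) % 6 = (l - 1) % 6 := by
  simp [bV]

theorem aV_ne_bV {E : SimpleGraph V} {g : Arc E} {v : V} {i k : ℕ} :
    aV g i ≠ bV E v k := by
  simp [aV, bV]

theorem exists_eq_aV_or_eq_bV {E : SimpleGraph V} (y : GEVert E) :
    (∃ g j, 1 ≤ j ∧ j ≤ 31 ∧ y = aV g j) ∨ (∃ v k, 1 ≤ k ∧ k ≤ 6 ∧ y = bV E v k) := by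
  rcases y with ⟨g, j⟩ | ⟨v, k⟩
  · exact .inl ⟨g, j + 1, by omega, by omega, by simp [aV, Nat.mod_eq_of_lt j.isLt]⟩
  · exact .inr ⟨v, k + 1, by omega, by omega, by simp [bV, Nat.mod_eq_of_lt k.isLt]⟩

instance : DecidableRel gadgetRel := fun i j => by unfold gadgetRel; infer_instance

theorem gadgetRel_bounds {i j : ℕ} (h : gadgetRel i j) : (1 ≤ i ∧ i ≤ 30) ∧ (2 ≤ j ∧ j ≤ 31) := by
  unfold gadgetRel at h
  omega

def gadgetNbrs (i : ℕ) : Finset ℕ := {j ∈ Finset.Icc 1 31 | gadgetRel i j ∨ gadgetRel j i}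

-- The positions of a gadget joined to another gadget: by the cyclic edges `a₃₁a₁` and by the link
-- edges `a₂₃a₃`, `a₁₈a₈`, `a₂₉a₉`, `a₂₄a₁₄`. The positions joined to some `b` are `5, 12, 23, 24`.
def gadgetPorts : Finset ℕ := {1, 3, 8, 9, 14, 18, 23, 24, 29, 31}

def gadgetInterior : Finset ℕ := Finset.Icc 1 31 \ (gadgetPorts ∪ {5, 12, 23, 24})

namespace GE

variable [Fintype V] {E : SimpleGraph V} [DecidableRel E.Adj]
  {f : Arc E ≃ Fin (Fintype.card (Arc E))}

theorem card_ne_one : Fintype.card (GEVert E) ≠ 1 := by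
  simp only [GEVert, Fintype.card_sum, Fintype.card_prod, Fintype.card_fin]
  omega

theorem rel_aV_aV {g g' : Arc E} {i j : ℕ} (hi₁ : 1 ≤ i) (hi₃₁ : i ≤ 31) (hj₁ : 1 ≤ j)
    (hj₃₁ : j ≤ 31) (h : GERel E f (aV g i) (aV g' j)) :
    (g' = g ∧ (gadgetRel i j ∨ gadgetRel j i)) ∨ (i ∈ gadgetPorts ∧ j ∈ gadgetPorts) := by
  rcases h with ⟨e, i', j', hr, h₁, h₂⟩ | ⟨e, e', -, h₁, h₂⟩ | ⟨e, e', -, h⟩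
  · obtain ⟨rfl, h₁⟩ := aV_eq_aV.mp h₁
    obtain ⟨rfl, h₂⟩ := aV_eq_aV.mp h₂
    obtain ⟨hi', hj'⟩ := gadgetRel_bounds hr
    obtain rfl : i = i' := by omega
    obtain rfl : j = j' := by omega
    exact .inl ⟨rfl, .inl hr⟩
  · simp only [aV_eq_aV] at h₁ h₂
    right
    simp only [gadgetPorts, Finset.mem_insert, Finset.mem_singleton]
    omega
  · simp only [aV_eq_aV, aV_ne_bV, false_and, and_false, or_false] at h
    right
    simp only [gadgetPorts, Finset.mem_insert, Finset.mem_singleton]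
    rcases h with h | h | h | h <;> omega

theorem adj_aV_aV {g g' : Arc E} {i j : ℕ} (hi₁ : 1 ≤ i) (hi₃₁ : i ≤ 31) (hj₁ : 1 ≤ j)
    (hj₃₁ : j ≤ 31) (h : (GE E f).Adj (aV g i) (aV g' j)) :
    (g' = g ∧ (gadgetRel i j ∨ gadgetRel j i)) ∨ (i ∈ gadgetPorts ∧ j ∈ gadgetPorts) := by
  obtain ⟨-, h | h⟩ := (fromRel_adj _ _ _).mp h
  · exact rel_aV_aV hi₁ hi₃₁ hj₁ hj₃₁ h
  · rcases rel_aV_aV hj₁ hj₃₁ hi₁ hi₃₁ h with ⟨rfl, hr⟩ | ⟨hj, hi⟩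
    · exact .inl ⟨rfl, hr.symm⟩
    · exact .inr ⟨hi, hj⟩

theorem adj_aV_bV {g : Arc E} {v : V} {i k : ℕ} (hi₁ : 1 ≤ i) (hi₃₁ : i ≤ 31)
    (h : (GE E f).Adj (aV g i) (bV E v k)) : i ∈ ({5, 12, 23, 24} : Finset ℕ) := by
  simp [GE, GERel, aV_eq_aV, aV_ne_bV, aV_ne_bV.symm, -Subtype.exists, -Prod.exists] at h
  simp only [Finset.mem_insert, Finset.mem_singleton]
  omega

theorem exists_mem_gadgetNbrs_of_adj {g : Arc E} {i : ℕ} {y : GEVert E}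
    (hi : i ∈ gadgetInterior) (h : (GE E f).Adj (aV g i) y) : ∃ j ∈ gadgetNbrs i, y = aV g j := by
  obtain ⟨hi, hport⟩ := Finset.mem_sdiff.mp hi
  obtain ⟨hi₁, hi₃₁⟩ := Finset.mem_Icc.mp hi
  obtain ⟨g', j, hj₁, hj₃₁, rfl⟩ | ⟨v, k, -, -, rfl⟩ := exists_eq_aV_or_eq_bV y
  · rcases adj_aV_aV hi₁ hi₃₁ hj₁ hj₃₁ h with ⟨rfl, hr⟩ | ⟨hi, -⟩
    · exact ⟨j, by simp [gadgetNbrs, hj₁, hj₃₁, hr], rfl⟩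
    · exact absurd (Finset.mem_union_left _ hi) hport
  · exact absurd (Finset.mem_union_right _ (adj_aV_bV hi₁ hi₃₁ h)) hport

theorem adj_aV_eight {g : Arc E} {y : GEVert E} (h : (GE E f).Adj (aV g 8) y) :
    y = aV g 7 ∨ y = aV g 9 ∨ ∃ g' : Arc E, y = aV g' 18 := by
  obtain ⟨g', j, -, -, rfl⟩ | ⟨v, k, -, -, rfl⟩ := exists_eq_aV_or_eq_bV y
  all_goals simp [GE, GERel, gadgetRel, aV_eq_aV, aV_ne_bV, aV_ne_bV.symm, -Subtype.exists,
    -Prod.exists] at h ⊢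
  all_goals grind

theorem adj_bV_six {v : V} {y : GEVert E} (h : (GE E f).Adj (bV E v 6) y) :
    y = bV E v 5 ∨ ∃ g : Arc E, y = aV g 12 := by
  obtain ⟨g', j, -, -, rfl⟩ | ⟨v, k, -, -, rfl⟩ := exists_eq_aV_or_eq_bV y
  all_goals simp [GE, GERel, bV_eq_bV, aV_eq_aV, aV_ne_bV, aV_ne_bV.symm, -Subtype.exists,
    -Prod.exists] at h ⊢
  all_goals grind

section Hamiltonian

variable [DecidableEq (GEVert E)] {r : GEVert E} {p : (GE E f).Walk r r}
  (hp : p.IsHamiltonianCycle)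
include hp

theorem mem_edges_of_gadgetNbrs_eq (g : Arc E) {i u w : ℕ} {X : Finset ℕ}
    (hi : i ∈ gadgetInterior) (hN : gadgetNbrs i = insert u (insert w X)) (huw : u ≠ w)
    (hX : ∀ x ∈ X, s(aV g x, aV g i) ∉ p.edges) :
    s(aV g u, aV g i) ∈ p.edges ∧ s(aV g i, aV g w) ∈ p.edges := by
  have hu : u ∈ gadgetNbrs i := by simp [hN]
  have hw : w ∈ gadgetNbrs i := by simp [hN]
  simp only [gadgetNbrs, Finset.mem_filter, Finset.mem_Icc] at hu hw
  rw [Sym2.eq_swap]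
  refine hp.mem_edges_of_forall (by rw [Ne, aV_eq_aV]; omega) fun y hy => ?_
  obtain ⟨j, hj, rfl⟩ := exists_mem_gadgetNbrs_of_adj hi (p.adj_of_mem_edges hy)
  rw [hN, Finset.mem_insert, Finset.mem_insert] at hj
  rcases hj with rfl | rfl | hj
  · exact .inl rfl
  · exact .inr rfl
  · exact absurd (Sym2.eq_swap ▸ hy) (hX j hj)

theorem mem_edges_seven (g : Arc E) :
    s(aV g 6, aV g 7) ∈ p.edges ∧ s(aV g 7, aV g 8) ∈ p.edges :=
  mem_edges_of_gadgetNbrs_eq hp g (X := ∅) (by decide) (by decide) (by decide) (by simp)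

theorem mem_edges_ten (g : Arc E) :
    s(aV g 9, aV g 10) ∈ p.edges ∧ s(aV g 10, aV g 11) ∈ p.edges :=
  mem_edges_of_gadgetNbrs_eq hp g (X := ∅) (by decide) (by decide) (by decide) (by simp)

theorem mem_edges_twelve_thirteen (g : Arc E) : s(aV g 12, aV g 13) ∈ p.edges :=
  (mem_edges_of_gadgetNbrs_eq hp g (w := 14) (X := ∅) (by decide) (by decide) (by decide)
    (by simp)).1

theorem mem_edges_eighteen_nineteen (g : Arc E) : s(aV g 18, aV g 19) ∈ p.edges :=
  (mem_edges_of_gadgetNbrs_eq hp g (w := 20) (X := ∅) (by decide) (by decide) (by decide)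
    (by simp)).1

-- Otherwise `a₆ a₇ a₈ a₉ a₁₀ a₁₁` would close a 6-cycle inside the Hamiltonian cycle.
theorem six_eleven_not_mem_of_eight_nine_mem (g : Arc E) (h89 : s(aV g 8, aV g 9) ∈ p.edges) :
    s(aV g 6, aV g 11) ∉ p.edges := by
  rw [Sym2.eq_swap]
  intro h116
  obtain ⟨h67, h78⟩ := mem_edges_seven hp g
  obtain ⟨h910, h1011⟩ := mem_edges_ten hp g
  set S : Set (GEVert E) := {aV g 6, aV g 7, aV g 8, aV g 9, aV g 10, aV g 11}
  have hS : ∀ x ∈ S, ∃ y₁ ∈ S, ∃ y₂ ∈ S, y₁ ≠ y₂ ∧ s(y₁, x) ∈ p.edges ∧ s(x, y₂) ∈ p.edges := by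
    simp only [S, Set.mem_insert_iff, Set.mem_singleton_iff]
    rintro x (rfl | rfl | rfl | rfl | rfl | rfl)
    · exact ⟨aV g 11, by simp, aV g 7, by simp, by simp [aV_eq_aV], h116, h67⟩
    · exact ⟨aV g 6, by simp, aV g 8, by simp, by simp [aV_eq_aV], h67, h78⟩
    · exact ⟨aV g 7, by simp, aV g 9, by simp, by simp [aV_eq_aV], h78, h89⟩
    · exact ⟨aV g 8, by simp, aV g 10, by simp, by simp [aV_eq_aV], h89, h910⟩
    · exact ⟨aV g 9, by simp, aV g 11, by simp, by simp [aV_eq_aV], h910, h1011⟩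
    · exact ⟨aV g 10, by simp, aV g 6, by simp, by simp [aV_eq_aV], h1011, h116⟩
  have h1 := hp.mem_of_forall_exists_two hS (v := aV g 6) (by simp [S]) (aV g 1)
  simp [S, aV_eq_aV] at h1

theorem eleven_twelve_mem_of_eight_nine_mem (g : Arc E) (h89 : s(aV g 8, aV g 9) ∈ p.edges) :
    s(aV g 11, aV g 12) ∈ p.edges :=
  (mem_edges_of_gadgetNbrs_eq hp g (u := 10) (X := {6}) (by decide) (by decide) (by decide)
    (by simpa using six_eleven_not_mem_of_eight_nine_mem hp g h89)).2

theorem eq_of_mem_edges_twelve (g : Arc E) {y z : GEVert E} (hy : s(y, aV g 12) ∈ p.edges)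
    (hz : s(z, aV g 12) ∈ p.edges) (hy13 : y ≠ aV g 13) (hz13 : z ≠ aV g 13) : y = z := by
  rw [Sym2.eq_swap] at hy hz
  exact hp.eq_of_mem_edges (mem_edges_twelve_thirteen hp g) hy hz hy13 hz13

theorem seventeen_eighteen_mem_of_mem_edges_twelve (g : Arc E) {y : GEVert E}
    (hy : s(y, aV g 12) ∈ p.edges) (hy13 : y ≠ aV g 13) (hy17 : y ≠ aV g 17) :
    s(aV g 17, aV g 18) ∈ p.edges := by
  have h1217 : s(aV g 12, aV g 17) ∉ p.edges := fun h1217 =>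
    hy17 (eq_of_mem_edges_twelve hp g hy (by rwa [Sym2.eq_swap]) hy13 (by simp [aV_eq_aV]))
  exact (mem_edges_of_gadgetNbrs_eq hp g (u := 16) (X := {12}) (by decide) (by decide)
    (by decide) (by simpa using h1217)).2

theorem seventeen_eighteen_mem_of_eight_nine_mem (g : Arc E)
    (h89 : s(aV g 8, aV g 9) ∈ p.edges) : s(aV g 17, aV g 18) ∈ p.edges :=
  seventeen_eighteen_mem_of_mem_edges_twelve hp g (eleven_twelve_mem_of_eight_nine_mem hp g h89)
    (by simp [aV_eq_aV]) (by simp [aV_eq_aV])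

theorem seventeen_eighteen_mem_of_bV_six_mem (g : Arc E) {v : V}
    (hb : s(bV E v 6, aV g 12) ∈ p.edges) : s(aV g 17, aV g 18) ∈ p.edges :=
  seventeen_eighteen_mem_of_mem_edges_twelve hp g hb aV_ne_bV.symm aV_ne_bV.symm

theorem eight_nine_not_mem_of_bV_six_mem (g : Arc E) {v : V}
    (hb : s(bV E v 6, aV g 12) ∈ p.edges) : s(aV g 8, aV g 9) ∉ p.edges := fun h89 =>
  aV_ne_bV (eq_of_mem_edges_twelve hp g (eleven_twelve_mem_of_eight_nine_mem hp g h89) hb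
    (by simp [aV_eq_aV]) aV_ne_bV.symm)

theorem exists_bV_six_mem_edges (v : V) : ∃ g : Arc E, s(bV E v 6, aV g 12) ∈ p.edges := by
  obtain ⟨y, ⟨g, rfl⟩, hy⟩ :=
    hp.exists_mem_edges_of_forall fun y hy => adj_bV_six (p.adj_of_mem_edges hy)
  exact ⟨g, hy⟩

theorem exists_link_of_eight_nine_not_mem (g : Arc E) (h89 : s(aV g 8, aV g 9) ∉ p.edges) :
    ∃ g' : Arc E, s(aV g' 18, aV g 8) ∈ p.edges := by
  obtain ⟨y, ⟨g', rfl⟩, hy⟩ := hp.exists_mem_edges_of_forall (u := aV g 7) fun y hy => by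
    rcases adj_aV_eight (p.adj_of_mem_edges hy) with h | rfl | h
    · exact .inl h
    · exact absurd hy h89
    · exact .inr h
  exact ⟨g', Sym2.eq_swap ▸ hy⟩

theorem seventeen_eighteen_not_mem_of_link {g g' : Arc E} (h : s(aV g' 18, aV g 8) ∈ p.edges) :
    s(aV g' 17, aV g' 18) ∉ p.edges := by
  rw [Sym2.eq_swap]
  intro h1817
  have := hp.eq_of_mem_edges (mem_edges_eighteen_nineteen hp g') h h1817 (by simp [aV_eq_aV])
    (by simp [aV_eq_aV])
  simp [aV_eq_aV] at this

theorem eq_of_link {g₁ g₂ g' : Arc E} (h₁ : s(aV g' 18, aV g₁ 8) ∈ p.edges)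
    (h₂ : s(aV g' 18, aV g₂ 8) ∈ p.edges) : g₁ = g₂ :=
  (aV_eq_aV.mp (hp.eq_of_mem_edges (mem_edges_eighteen_nineteen hp g') h₁ h₂
    (by simp [aV_eq_aV]) (by simp [aV_eq_aV]))).1

end Hamiltonian

end GE

theorem stmt10_general {V : Type*} [Fintype V] [DecidableEq V] (E : SimpleGraph V)
    [DecidableRel E.Adj]
    (f : Arc E ≃ Fin (Fintype.card (Arc E))) :
    ¬ (GE E f).IsHamiltonian := by
  classical
  intro hH
  obtain ⟨r, p, hp⟩ := hH GE.card_ne_one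
  let A : Finset (Arc E) := {g | s(aV g 8, aV g 9) ∉ p.edges}
  let B : Finset (Arc E) := {g | s(aV g 17, aV g 18) ∉ p.edges}
  let D : Finset (Arc E) := {g | ∃ v, s(bV E v 6, aV g 12) ∈ p.edges}
  have hBA : B ⊆ A := fun g => by
    simpa [A, B] using mt (GE.seventeen_eighteen_mem_of_eight_nine_mem hp g)
  have hDA : D ⊆ A := fun g => by
    simpa [A, D] using fun v => GE.eight_nine_not_mem_of_bV_six_mem hp g (v := v)
  have hBD : Disjoint B D := Finset.disjoint_left.mpr fun g hB hD => by
    obtain ⟨v, hv⟩ := (Finset.mem_filter.mp hD).2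
    exact (Finset.mem_filter.mp hB).2 (GE.seventeen_eighteen_mem_of_bV_six_mem hp g hv)
  have hD : D.Nonempty := by
    obtain ⟨g, hg⟩ := GE.exists_bV_six_mem_edges hp (r.elim (·.1.1.1) (·.1))
    exact ⟨g, Finset.mem_filter.mpr ⟨Finset.mem_univ g, _, hg⟩⟩
  have hAB : A.card ≤ B.card := Finset.card_le_card_of_forall_subsingleton
    (fun g g' => s(aV g' 18, aV g 8) ∈ p.edges)
    (fun g hg => by
      obtain ⟨g', hg'⟩ := GE.exists_link_of_eight_nine_not_mem hp g (Finset.mem_filter.mp hg).2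
      exact ⟨g', Finset.mem_filter.mpr ⟨Finset.mem_univ g',
        GE.seventeen_eighteen_not_mem_of_link hp hg'⟩, hg'⟩)
    (fun _ _ _ hg₁ _ hg₂ => GE.eq_of_link hp hg₁.2 hg₂.2)
  have hBDA := Finset.card_le_card (Finset.union_subset hBA hDA)
  rw [Finset.card_union_of_disjoint hBD] at hBDA
  have := hD.card_pos
  omega

/-- For every `d ≥ 1` and every `d`-regular base graph `E`, the graph `G_E`
is not Hamiltonian. -/
theorem stmt10 {V : Type*} [Fintype V] [DecidableEq V] (E : SimpleGraph V)
    [DecidableRel E.Adj] (d : ℕ) (hd : 1 ≤ d) (hreg : IsRegularDeg E d)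
    (f : Arc E ≃ Fin (Fintype.card (Arc E))) :
    ¬ (GE E f).IsHamiltonian :=
  stmt10_general E f
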